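/- Let φ be a Leibniz 2-cocycle on the Witt algebra with φ(L_0, L_n) = 0 for all n ≠ 0 and φ(L_{-1}, L_1) = φ(L_1, L_{-1}) = 0, normalized by φ(L_2, L_{-2}) = 1/2. Then φ(L_n, L_{-n}) = (n³−n)/12 for all n ∈ ℤ. -/

import Mathlib

/-!
On basis vectors the cocycle identity for `(L m, L 1, L (-m-1))` reads
`(m - 1) φ(L_{m+1}, L_{-m-1}) = (m + 2) φ(L_m, L_{-m}) + (2m + 1) φ(L_{-1}, L_1)`.
Once `φ(L_{-1}, L_1) = 0`, the diagonal `d m = φ(L_m, L_{-m})` satisfies the same first-order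
recurrence as `(m³ - m)/12 = (m - 1) m (m + 1)/12`; at `m = 1, 0` it forces `d 1 = d 0 = 0`, and
from `d 2 = 1/2` it determines `d m` for `m ≥ 2`. The identity for `(L 0, L n, L (-n))` gives
`n (d n + d (-n)) = -2n d 0`, so `d` is odd, which handles negative indices.
-/

abbrev W : Type := ℤ →₀ ℂ

noncomputable def Lw (n : ℤ) : W := Finsupp.single n 1

/-- The bilinear bracket of the Witt algebra: `[L n, L m] = (m - n) • L (n+m)`. -/
noncomputable def bkW : W →ₗ[ℂ] W →ₗ[ℂ] W :=
  Finsupp.lsum ℂ fun n => LinearMap.toSpanSingleton ℂ (W →ₗ[ℂ] W)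
    (Finsupp.lsum ℂ fun m => LinearMap.toSpanSingleton ℂ W (((m : ℂ) - n) • Lw (n + m)))

/-- `φ` is a Leibniz 2-cocycle on the Witt algebra. -/
def IsLeibnizCocycleW (φ : W →ₗ[ℂ] W →ₗ[ℂ] ℂ) : Prop :=
  ∀ x y z : W, φ x (bkW y z) = φ (bkW x y) z - φ (bkW x z) y

lemma bkW_Lw (n m : ℤ) : bkW (Lw n) (Lw m) = ((m : ℂ) - n) • Lw (n + m) := by
  simp only [bkW, Lw, Finsupp.lsum_single, LinearMap.toSpanSingleton_apply, one_smul]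

lemma eq_cube_sub_div_twelve_of_recurrence {K : Type*} [Field K] [CharZero K] (f : ℕ → K)
    (hrec : ∀ m : ℕ, ((m : K) - 1) * f (m + 1) = ((m : K) + 2) * f m) (h2 : f 2 = 1 / 2)
    (n : ℕ) : f n = ((n : K) ^ 3 - n) / 12 := by
  have f1 : f 1 = 0 := by
    have h := hrec 1
    norm_num at h
    exact h
  have f0 : f 0 = 0 := by
    have h := hrec 0
    norm_num [f1] at h
    exact h
  obtain _ | _ | k := n
  · simp [f0]
  · simp [f1]
  induction k with
  | zero => norm_num [h2]
  | succ k ih =>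
    have h := hrec (k + 2)
    push_cast at h ih ⊢
    rw [ih] at h
    apply mul_left_cancel₀ (Nat.cast_add_one_ne_zero (R := K) k)
    linear_combination h

namespace IsLeibnizCocycleW

variable {φ : W →ₗ[ℂ] W →ₗ[ℂ] ℂ} (hco : IsLeibnizCocycleW φ)
include hco

lemma apply_Lw (m n p : ℤ) :
    ((p : ℂ) - n) * φ (Lw m) (Lw (n + p)) =
      ((n : ℂ) - m) * φ (Lw (m + n)) (Lw p) - ((p : ℂ) - m) * φ (Lw (m + p)) (Lw n) := by
  simpa [bkW_Lw, smul_eq_mul] using hco (Lw m) (Lw n) (Lw p)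

lemma diag_recurrence (h1 : φ (Lw (-1)) (Lw 1) = 0) (m : ℤ) :
    ((m : ℂ) - 1) * φ (Lw (m + 1)) (Lw (-(m + 1))) = ((m : ℂ) + 2) * φ (Lw m) (Lw (-m)) := by
  have h := hco.apply_Lw m 1 (-m - 1)
  rw [show (1 : ℤ) + (-m - 1) = -m by ring, show m + (-m - 1) = -1 by ring, h1] at h
  rw [show -(m + 1) = -m - 1 by ring]
  push_cast at h ⊢
  linear_combination h

lemma diag_neg (h00 : φ (Lw 0) (Lw 0) = 0) (n : ℤ) :
    φ (Lw (-n)) (Lw n) = -φ (Lw n) (Lw (-n)) := by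
  rcases eq_or_ne n 0 with rfl | hn
  · simp [h00]
  have h := hco.apply_Lw 0 n (-n)
  simp only [add_neg_cancel, zero_add, Int.cast_neg, Int.cast_zero, sub_zero, h00,
    mul_zero] at h
  have hsum : (n : ℂ) * (φ (Lw (-n)) (Lw n) + φ (Lw n) (Lw (-n))) = 0 := by
    linear_combination -h
  linear_combination (mul_eq_zero.mp hsum).resolve_left (Int.cast_ne_zero.mpr hn)

end IsLeibnizCocycleW

theorem stmt7_general (φ : W →ₗ[ℂ] W →ₗ[ℂ] ℂ) (hco : IsLeibnizCocycleW φ)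
    (h1 : φ (Lw (-1)) (Lw 1) = 0)
    (hnorm : φ (Lw 2) (Lw (-2)) = 1 / 2) :
    ∀ n : ℤ, φ (Lw n) (Lw (-n)) = ((n : ℂ) ^ 3 - (n : ℂ)) / 12 := by
  have hnat (k : ℕ) : φ (Lw k) (Lw (-k)) = ((k : ℂ) ^ 3 - k) / 12 :=
    eq_cube_sub_div_twelve_of_recurrence (fun k : ℕ => φ (Lw k) (Lw (-k)))
      (fun m => by exact_mod_cast hco.diag_recurrence h1 m) (by exact_mod_cast hnorm) k
  have h00 : φ (Lw 0) (Lw 0) = 0 := by simpa using hnat 0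
  intro n
  obtain ⟨k, rfl | rfl⟩ := Int.eq_nat_or_neg n
  · exact_mod_cast hnat k
  · rw [neg_neg, hco.diag_neg h00, hnat k]
    push_cast
    ring

theorem stmt7 (φ : W →ₗ[ℂ] W →ₗ[ℂ] ℂ) (hco : IsLeibnizCocycleW φ)
    (h0 : ∀ n : ℤ, n ≠ 0 → φ (Lw 0) (Lw n) = 0)
    (h1 : φ (Lw (-1)) (Lw 1) = 0) (h2 : φ (Lw 1) (Lw (-1)) = 0)
    (hnorm : φ (Lw 2) (Lw (-2)) = 1 / 2) :
    ∀ n : ℤ, φ (Lw n) (Lw (-n)) = ((n : ℂ) ^ 3 - (n : ℂ)) / 12 :=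
  stmt7_general φ hco h1 hnorm
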